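/- arXiv:0806.2941 — 2 statements merged into one kernel-verified Lean document; each statement's English description precedes it below -/
import Mathlib

section
/- Let F be the distribution function of a real-valued random variable. Then the Lebesgue measure of I := ∪_{[x,y] ∈ I^max} [x,y], the union of all maximal 'bad' intervals for F, is at most 1. -/
open Filter MeasureTheory

/-- For `x < y`, the interval `[x,y]` is a 'bad' interval for `F` if `F(y) - F(x) ≥ y - x`. -/
def IsBad (F : ℝ → ℝ) (x y : ℝ) : Prop := x < y ∧ y - x ≤ F y - F x

/-- `[x,y]` is a maximal 'bad' interval for `F` if it is bad and every bad interval is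
either contained in it or disjoint from it. -/
def IsMaxBad (F : ℝ → ℝ) (x y : ℝ) : Prop :=
  IsBad F x y ∧ ∀ a b, IsBad F a b →
    Set.Icc a b ⊆ Set.Icc x y ∨ Set.Icc a b ∩ Set.Icc x y = ∅

/-- The union `I` of all maximal 'bad' intervals of `F`. -/
def badUnion (F : ℝ → ℝ) : Set ℝ :=
  {t | ∃ x y, IsMaxBad F x y ∧ t ∈ Set.Icc x y}

/-!
Distinct maximal bad intervals are disjoint, so there are countably many of them, and on each
one the length is at most the mass `F y - F x` that the Stieltjes measure of `F` gives to
`(x, y]`. Summing over the disjoint family, the Lebesgue measure of their union is at most the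
total mass of that measure, which is `1`.
-/

open Set

/-- The family `I^max` of maximal bad intervals, each `[x, y]` encoded as the pair `(x, y)`. -/
def maxBad (F : ℝ → ℝ) : Set (ℝ × ℝ) := {p | IsMaxBad F p.1 p.2}

lemma badUnion_eq_biUnion (F : ℝ → ℝ) : badUnion F = ⋃ p ∈ maxBad F, Icc p.1 p.2 := by
  ext t
  simp only [badUnion, maxBad, mem_ofPred_eq, mem_iUnion, exists_prop, Prod.exists]

lemma IsMaxBad.Icc_subset_of_inter_nonempty {F : ℝ → ℝ} {x y a b : ℝ}
    (hxy : IsMaxBad F x y) (hab : IsBad F a b) (hne : (Icc a b ∩ Icc x y).Nonempty) :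
    Icc a b ⊆ Icc x y :=
  (hxy.2 a b hab).resolve_right hne.ne_empty

lemma pairwiseDisjoint_maxBad (F : ℝ → ℝ) :
    (maxBad F).PairwiseDisjoint fun p => Icc p.1 p.2 := by
  rintro p hp q hq hpq
  rw [Function.onFun, disjoint_iff_inter_eq_empty, ← not_nonempty_iff_eq_empty]
  intro hne
  have hpq_ends := (Icc_subset_Icc_iff hp.1.1.le).1 (hq.Icc_subset_of_inter_nonempty hp.1 hne)
  have hqp_ends := (Icc_subset_Icc_iff hq.1.1.le).1
    (hp.Icc_subset_of_inter_nonempty hq.1 (inter_comm _ _ ▸ hne))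
  exact hpq (Prod.ext (le_antisymm hqp_ends.1 hpq_ends.1) (le_antisymm hpq_ends.2 hqp_ends.2))

lemma countable_maxBad (F : ℝ → ℝ) : (maxBad F).Countable :=
  ((pairwiseDisjoint_maxBad F).mono fun _ => Ioo_subset_Icc_self).countable_of_isOpen
    (fun _ _ => isOpen_Ioo) fun _ hp => nonempty_Ioo.2 hp.1.1

lemma StieltjesFunction.volume_biUnion_Icc_le (f : StieltjesFunction ℝ) {s : Set (ℝ × ℝ)}
    (hs : s.Countable) (hd : s.PairwiseDisjoint fun p => Ioc p.1 p.2)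
    (hf : ∀ p ∈ s, p.2 - p.1 ≤ f p.2 - f p.1) :
    volume (⋃ p ∈ s, Icc p.1 p.2) ≤ f.measure (⋃ p ∈ s, Ioc p.1 p.2) :=
  calc volume (⋃ p ∈ s, Icc p.1 p.2)
      ≤ ∑' p : s, volume (Icc (p : ℝ × ℝ).1 (p : ℝ × ℝ).2) := measure_biUnion_le volume hs _
    _ ≤ ∑' p : s, f.measure (Ioc (p : ℝ × ℝ).1 (p : ℝ × ℝ).2) := by
        refine ENNReal.tsum_le_tsum fun p => ?_
        rw [Real.volume_Icc, f.measure_Ioc]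
        exact ENNReal.ofReal_le_ofReal (hf p p.2)
    _ = f.measure (⋃ p ∈ s, Ioc p.1 p.2) :=
        (measure_biUnion hs hd fun _ _ => measurableSet_Ioc).symm

theorem stmt_7_general (F : ℝ → ℝ) (hmono : Monotone F)
    (hrc : ∀ t, ContinuousWithinAt F (Set.Ici t) t)
    (hbot : Tendsto F atBot (nhds 0)) (htop : Tendsto F atTop (nhds 1)) :
    volume (badUnion F) ≤ 1 := by
  let f : StieltjesFunction ℝ := ⟨F, hmono, hrc⟩
  calc volume (badUnion F)
      ≤ f.measure (⋃ p ∈ maxBad F, Ioc p.1 p.2) := by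
        rw [badUnion_eq_biUnion]
        exact f.volume_biUnion_Icc_le (countable_maxBad F)
          ((pairwiseDisjoint_maxBad F).mono fun _ => Ioc_subset_Icc_self) fun p hp => hp.1.2
    _ ≤ f.measure univ := measure_mono (subset_univ _)
    _ = 1 := by rw [f.measure_univ hbot htop]; norm_num

/-- **Lemma (i).** If `F` is a distribution function (nondecreasing, with values in
`[0,1]`, right-continuous, with limits `0` at `-∞` and `1` at `+∞`), then the Lebesgue
measure of the union `I` of all maximal 'bad' intervals for `F` is at most `1`. -/
theorem stmt_7 (F : ℝ → ℝ) (hmono : Monotone F)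
    (hrange : ∀ t, F t ∈ Set.Icc (0 : ℝ) 1)
    (hrc : ∀ t, ContinuousWithinAt F (Set.Ici t) t)
    (hbot : Tendsto F atBot (nhds 0)) (htop : Tendsto F atTop (nhds 1)) :
    volume (badUnion F) ≤ 1 :=
  stmt_7_general F hmono hrc hbot htop
end

section
/- Let F be the distribution function of a real-valued random variable. Then for every maximal 'bad' interval [x,y] for F one has F(y) − F(x) = y − x. -/
/-
If `[x, y]` is bad with excess `F y - F x > y - x`, then by monotonicity `[x, x + (F y - F x)]`
is a strictly longer bad interval with the same left endpoint, which neither lies inside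
`[x, y]` nor is disjoint from it.
-/

open Filter

variable {F : ℝ → ℝ} {x y z : ℝ}

theorem IsBad.extend_right (hmono : Monotone F) (h : IsBad F x y) :
    IsBad F x (x + (F y - F x)) := by
  obtain ⟨hxy, hle⟩ := h
  have hFy : F y ≤ F (x + (F y - F x)) := hmono (by linarith)
  exact ⟨by linarith, by linarith⟩

theorem IsMaxBad.le_of_isBad (h : IsMaxBad F x y) (hz : IsBad F x z) : z ≤ y := by
  rcases h.2 x z hz with hsub | hdisj
  · exact (hsub (Set.right_mem_Icc.2 hz.1.le)).2
  · have hx : x ∈ Set.Icc x z ∩ Set.Icc x y :=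
      ⟨Set.left_mem_Icc.2 hz.1.le, Set.left_mem_Icc.2 h.1.1.le⟩
    exact absurd hdisj (Set.nonempty_iff_ne_empty.1 ⟨x, hx⟩)

theorem IsMaxBad.sub_eq (hmono : Monotone F) (h : IsMaxBad F x y) : F y - F x = y - x := by
  have hle : x + (F y - F x) ≤ y := h.le_of_isBad (h.1.extend_right hmono)
  linarith [h.1.2]

theorem stmt_8_general (F : ℝ → ℝ) (hmono : Monotone F) :
    ∀ x y, IsMaxBad F x y → F y - F x = y - x :=
  fun _ _ h => h.sub_eq hmono

/-- **Lemma (ii).** If `F` is a distribution function (nondecreasing, with values in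
`[0,1]`, right-continuous, with limits `0` at `-∞` and `1` at `+∞`), then every maximal
'bad' interval `[x,y]` for `F` satisfies `F(y) - F(x) = y - x`. -/
theorem stmt_8 (F : ℝ → ℝ) (hmono : Monotone F)
    (hrange : ∀ t, F t ∈ Set.Icc (0 : ℝ) 1)
    (hrc : ∀ t, ContinuousWithinAt F (Set.Ici t) t)
    (hbot : Tendsto F atBot (nhds 0)) (htop : Tendsto F atTop (nhds 1)) :
    ∀ x y, IsMaxBad F x y → F y - F x = y - x :=
  stmt_8_general F hmono
end
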